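/- Let p ≥ 1 be a natural number and q a real number with q > φ and S(q,0,p) ≥ 2. Then for every natural number h, S(q, p+h, p) ≥ q^p f_h. -/
import Mathlib


/-- The Fibonacci-like sequence with `f 0 = f 1 = 1`. -/
def fib1 : ℕ → ℕ
  | 0 => 1
  | 1 => 1
  | n + 2 => fib1 (n + 1) + fib1 n

/-- The golden ratio. -/
noncomputable def phi : ℝ := (1 + Real.sqrt 5) / 2

/-- `Sp q h p = ∑_{k=0}^∞ f_{pk+h} / q^{pk}`. -/
noncomputable def Sp (q : ℝ) (h p : ℕ) : ℝ := ∑' k : ℕ, (fib1 (p * k + h) : ℝ) / q ^ (p * k)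

lemma fib1_eq_fib : ∀ n, fib1 n = Nat.fib (n + 1)
  | 0 => rfl
  | 1 => rfl
  | n + 2 => by
    rw [fib1, fib1_eq_fib (n + 1), fib1_eq_fib n, Nat.fib_add_two (n := n + 1)]
    omega

lemma fib1_mul_le (a b : ℕ) : fib1 a * fib1 b ≤ fib1 (a + b) := by
  rw [fib1_eq_fib, fib1_eq_fib, fib1_eq_fib]
  have h := Nat.fib_add a b
  omega

lemma sqrt5_facts : Real.sqrt 5 ^ 2 = 5 ∧ 2 ≤ Real.sqrt 5 := by
  have h1 : Real.sqrt 5 ^ 2 = 5 := Real.sq_sqrt (by norm_num)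
  refine ⟨h1, ?_⟩
  nlinarith [Real.sqrt_nonneg 5]

lemma one_lt_phi : 1 < phi := by
  obtain ⟨h1, h2⟩ := sqrt5_facts
  unfold phi; linarith

lemma phi_sq : phi ^ 2 = phi + 1 := by
  obtain ⟨h1, h2⟩ := sqrt5_facts
  unfold phi; nlinarith

lemma fib1_le_phi_pow : ∀ n, (fib1 n : ℝ) ≤ phi ^ n
  | 0 => by simp [fib1]
  | 1 => by simpa [fib1] using one_lt_phi.le
  | n + 2 => by
    have h1 := fib1_le_phi_pow (n + 1)
    have h2 := fib1_le_phi_pow n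
    have hpow : phi ^ (n + 2) = phi ^ (n + 1) + phi ^ n := by
      have : phi ^ (n + 2) = phi ^ n * phi ^ 2 := by ring
      rw [this, phi_sq]; ring
    rw [fib1, hpow]
    push_cast
    linarith

lemma phi_pos : 0 < phi := lt_trans one_pos one_lt_phi

lemma sp_summable (q : ℝ) (hq : phi < q) (p h : ℕ) (hp : 1 ≤ p) :
    Summable (fun k : ℕ => (fib1 (p * k + h) : ℝ) / q ^ (p * k)) := by
  have hq0 : 0 < q := lt_trans phi_pos hq
  have hd0 : 0 ≤ phi / q := div_nonneg phi_pos.le hq0.le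
  have hr0 : 0 ≤ (phi / q) ^ p := pow_nonneg hd0 p
  have hr : (phi / q) ^ p < 1 := pow_lt_one₀ hd0 ((div_lt_one hq0).mpr hq) (by omega)
  refine Summable.of_nonneg_of_le ?_ ?_ ((summable_geometric_of_lt_one hr0 hr).mul_left (phi ^ h))
  · intro k
    exact div_nonneg (Nat.cast_nonneg _) (pow_nonneg hq0.le _)
  · intro k
    rw [div_le_iff₀ (pow_pos hq0 _)]
    calc (fib1 (p * k + h) : ℝ) ≤ phi ^ (p * k + h) := fib1_le_phi_pow _
      _ = phi ^ h * ((phi / q) ^ p) ^ k * q ^ (p * k) := by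
          have hne : q ^ (p * k) ≠ 0 := (pow_pos hq0 _).ne'
          rw [← pow_mul, div_pow, pow_add, mul_assoc, div_mul_cancel₀ _ hne]
          ring

lemma sp_shift (q : ℝ) (hq : phi < q) (p h : ℕ) (hp : 1 ≤ p) :
    Sp q (p + h) p = q ^ p * (Sp q h p - (fib1 h : ℝ)) := by
  have hq0 : 0 < q := lt_trans phi_pos hq
  have hqp : (0 : ℝ) < q ^ p := by positivity
  have hs := sp_summable q hq p h hp
  have key : Sp q h p = (fib1 h : ℝ) + Sp q (p + h) p / q ^ p := by
    unfold Sp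
    rw [Summable.tsum_eq_zero_add hs]
    congr 1
    · simp
    · rw [← tsum_div_const]
      apply tsum_congr
      intro k
      have e : p * (k + 1) + h = p * k + (p + h) := by ring
      rw [e, Nat.mul_add, mul_one, pow_add, div_div]
  rw [key]
  field_simp
  ring

theorem stmt8 (p : ℕ) (hp : 1 ≤ p) (q : ℝ) (hq : phi < q) (hS : 2 ≤ Sp q 0 p) :
    ∀ h : ℕ, q ^ p * (fib1 h : ℝ) ≤ Sp q (p + h) p := by
  intro h
  have hq0 : 0 < q := lt_trans phi_pos hq
  have hqp : (0 : ℝ) < q ^ p := by positivity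
  have h0 := sp_summable q hq p 0 hp
  have hh := sp_summable q hq p h hp
  have hbound : (fib1 h : ℝ) * Sp q 0 p ≤ Sp q h p := by
    unfold Sp
    rw [← tsum_mul_left]
    apply Summable.tsum_le_tsum _ (h0.mul_left _) hh
    intro k
    rw [add_zero, mul_div_assoc']
    have hfib : fib1 h * fib1 (p * k) ≤ fib1 (p * k + h) := by
      rw [Nat.mul_comm]; exact fib1_mul_le _ _
    gcongr
    exact_mod_cast hfib
  have hfh0 : (0 : ℝ) ≤ (fib1 h : ℝ) := by positivity
  have h2fh : 2 * (fib1 h : ℝ) ≤ Sp q h p := by nlinarith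
  rw [sp_shift q hq p h hp]
  nlinarith
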